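/- Let S ⊆ Sⁿ be a linear subspace invariant under squaring and nonzero. Then S contains a matrix E that is a unit for S under matrix multiplication: E is idempotent (E² = E) and EX = XE = X for all X ∈ S. -/

import Mathlib

/-! Take `A ∈ S` of maximal rank. For `X ∈ S` the matrix `A² + X² ∈ S` has kernel
`ker A ∩ ker X`, so maximality forces `ker A ⊆ ker X`. The projection `E` onto the range of `A`
is `p(A)` for a polynomial `p` without constant term, so `E ∈ S`: by polarization
`XY + YX = (X + Y)² - X² - Y²`, a subspace closed under squaring contains all positive powers of
its elements. Then `A (E - 1) = 0` and `ker A ⊆ ker X` give `X E = X`, and `E X = X` by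
transposition. -/

open Matrix Polynomial

namespace Submodule

variable {R A : Type*} [CommRing R] [Ring A] [Algebra R A] {S : Submodule R A}

theorem mul_add_mul_mem_of_mul_self_mem (hsq : ∀ x ∈ S, x * x ∈ S)
    {x y : A} (hx : x ∈ S) (hy : y ∈ S) : x * y + y * x ∈ S := by
  have h : x * y + y * x = (x + y) * (x + y) - x * x - y * y := by noncomm_ring
  rw [h]
  exact S.sub_mem (S.sub_mem (hsq _ (S.add_mem hx hy)) (hsq x hx)) (hsq y hy)

variable [Invertible (2 : R)]

theorem pow_succ_mem_of_mul_self_mem (hsq : ∀ x ∈ S, x * x ∈ S)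
    {x : A} (hx : x ∈ S) (k : ℕ) : x ^ (k + 1) ∈ S := by
  induction k with
  | zero => simpa using hx
  | succ k ih =>
    have h : x ^ (k + 2) = (⅟2 : R) • (x * x ^ (k + 1) + x ^ (k + 1) * x) := by
      rw [← pow_succ', ← pow_succ, ← two_smul R, smul_smul, invOf_mul_self, one_smul]
    rw [h]
    exact S.smul_mem _ (S.mul_add_mul_mem_of_mul_self_mem hsq hx ih)

theorem aeval_mem_of_mul_self_mem (hsq : ∀ x ∈ S, x * x ∈ S)
    {x : A} (hx : x ∈ S) {p : R[X]} (hp : p.coeff 0 = 0) : aeval x p ∈ S := by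
  rw [aeval_eq_sum_range]
  refine S.sum_mem fun i _ => ?_
  cases i with
  | zero => simp [hp]
  | succ k => exact S.smul_mem _ (S.pow_succ_mem_of_mul_self_mem hsq hx k)

end Submodule

theorem IsSelfAdjoint.exists_polynomial_isIdempotentElem_aeval {A : Type*} [Ring A] [StarRing A]
    [Algebra ℝ A] [TopologicalSpace A] [ContinuousFunctionalCalculus ℝ A IsSelfAdjoint]
    {a : A} (ha : IsSelfAdjoint a) (hfin : (spectrum ℝ a).Finite) :
    ∃ p : ℝ[X], p.coeff 0 = 0 ∧ IsIdempotentElem (aeval a p) ∧ a * aeval a p = a := by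
  set p := Lagrange.interpolate (insert 0 hfin.toFinset) id fun x => if x = 0 then 0 else 1
  have hp : ∀ x, x = 0 ∨ x ∈ spectrum ℝ a → p.eval x = if x = 0 then 0 else 1 := by
    intro x hx
    refine Lagrange.eval_interpolate_at_node _ Function.injective_id.injOn ?_
    simpa using hx
  refine ⟨p, by simpa [coeff_zero_eq_eval_zero] using hp 0 (.inl rfl), ?_, ?_⟩
  · calc aeval a p * aeval a p = cfc (p * p).eval a := by rw [cfc_polynomial (p * p) a, map_mul]
      _ = cfc p.eval a := cfc_congr fun x hx => by
          rw [eval_mul, hp x (.inr hx)]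
          split_ifs <;> simp
      _ = aeval a p := cfc_polynomial p a
  · calc a * aeval a p = cfc (X * p).eval a := by rw [cfc_polynomial (X * p) a, map_mul, aeval_X]
      _ = cfc id a := cfc_congr fun x hx => by
          rw [eval_mul, eval_X, hp x (.inr hx)]
          split_ifs with h <;> simp [h]
      _ = a := cfc_id ℝ a

namespace Matrix

variable {l m n : Type*} [Fintype n]

theorem ker_mulVecLin_fromRows {R : Type*} [CommRing R] (A : Matrix l n R) (B : Matrix m n R) :
    LinearMap.ker (fromRows A B).mulVecLin =
      LinearMap.ker A.mulVecLin ⊓ LinearMap.ker B.mulVecLin := by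
  ext v
  simp [fromRows_mulVec, funext_iff, Sum.forall]

theorem ker_mulVecLin_transpose_mul_self_add {K : Type*} [Field K] [LinearOrder K]
    [IsStrictOrderedRing K] [Fintype l] [Fintype m] (A : Matrix l n K) (B : Matrix m n K) :
    LinearMap.ker (Aᵀ * A + Bᵀ * B).mulVecLin =
      LinearMap.ker A.mulVecLin ⊓ LinearMap.ker B.mulVecLin := by
  rw [← ker_mulVecLin_fromRows, ← ker_mulVecLin_transpose_mul_self (fromRows A B),
    transpose_fromRows, fromCols_mul_fromRows]

theorem ker_mulVecLin_eq_of_le_of_rank_le {K : Type*} [Field K] {A B : Matrix m n K}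
    (hker : LinearMap.ker B.mulVecLin ≤ LinearMap.ker A.mulVecLin) (hrank : B.rank ≤ A.rank) :
    LinearMap.ker B.mulVecLin = LinearMap.ker A.mulVecLin := by
  refine Submodule.eq_of_le_of_finrank_le hker ?_
  have hA : A.rank + _ = _ := A.mulVecLin.finrank_range_add_finrank_ker
  have hB : B.rank + _ = _ := B.mulVecLin.finrank_range_add_finrank_ker
  omega

theorem mul_eq_of_ker_le_of_mul_eq {R : Type*} [CommRing R] {A : Matrix l n R} {X : Matrix m n R}
    {E : Matrix n n R} (hker : LinearMap.ker A.mulVecLin ≤ LinearMap.ker X.mulVecLin)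
    (hAE : A * E = A) : X * E = X := by
  refine ext_iff_mulVec.mpr fun v => ?_
  have hv : E *ᵥ v - v ∈ LinearMap.ker A.mulVecLin := by
    simp [mulVec_sub, mulVec_mulVec, hAE]
  simpa [mulVec_sub, mulVec_mulVec, sub_eq_zero] using hker hv

theorem exists_rank_isGreatest {R : Type*} [CommRing R] [StrongRankCondition R]
    {s : Set (Matrix m n R)} (hs : s.Nonempty) : ∃ A ∈ s, ∀ B ∈ s, B.rank ≤ A.rank := by
  obtain ⟨r, ⟨A, hA, rfl⟩, hr⟩ := BddAbove.exists_isGreatest_of_nonempty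
    ⟨Fintype.card n, by rintro _ ⟨B, -, rfl⟩; exact B.rank_le_card_width⟩ (hs.image rank)
  exact ⟨A, hA, fun B hB => hr ⟨B, hB, rfl⟩⟩

end Matrix

theorem stmt6_general {n : ℕ} (S : Submodule ℝ (Matrix (Fin n) (Fin n) ℝ))
    (hSsym : ∀ A ∈ S, A.IsSymm)
    (hsq : ∀ X ∈ S, X * X ∈ S) :
    ∃ E ∈ S, E * E = E ∧ ∀ X ∈ S, E * X = X ∧ X * E = X := by
  obtain ⟨A, hAS, hAmax⟩ :=
    exists_rank_isGreatest (s := (S : Set (Matrix (Fin n) (Fin n) ℝ))) ⟨0, S.zero_mem⟩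
  have hA : IsSelfAdjoint A := isHermitian_iff_isSymm.mpr (hSsym A hAS)
  have hker : ∀ X ∈ S, LinearMap.ker A.mulVecLin ≤ LinearMap.ker X.mulVecLin := by
    intro X hX
    have hB : Aᵀ * A + Xᵀ * X ∈ S := by
      rw [(hSsym A hAS).eq, (hSsym X hX).eq]
      exact S.add_mem (hsq A hAS) (hsq X hX)
    have hBker := ker_mulVecLin_transpose_mul_self_add A X
    rw [← ker_mulVecLin_eq_of_le_of_rank_le (hBker.trans_le inf_le_left) (hAmax _ hB), hBker]
    exact inf_le_right
  obtain ⟨p, hp0, hidem, hAE⟩ := hA.exists_polynomial_isIdempotentElem_aeval A.finite_spectrum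
  have hES : aeval A p ∈ S := S.aeval_mem_of_mul_self_mem hsq hAS hp0
  refine ⟨aeval A p, hES, hidem, fun X hX => ?_⟩
  have hXE : X * aeval A p = X := mul_eq_of_ker_le_of_mul_eq (hker X hX) hAE
  refine ⟨?_, hXE⟩
  simpa [(hSsym X hX).eq, (hSsym _ hES).eq] using congrArg transpose hXE

/-- A nonzero subspace of real symmetric matrices invariant under squaring contains a
matrix `E` that is a multiplicative unit for the subspace. -/
theorem stmt6 {n : ℕ} (S : Submodule ℝ (Matrix (Fin n) (Fin n) ℝ))
    (hSsym : ∀ A ∈ S, A.IsSymm)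
    (hsq : ∀ X ∈ S, X * X ∈ S)
    (hS0 : S ≠ ⊥) :
    ∃ E ∈ S, E * E = E ∧ ∀ X ∈ S, E * X = X ∧ X * E = X :=
  stmt6_general S hSsym hsq
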